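/- arXiv:2212.00381 — 5 statements merged into one kernel-verified Lean document; each statement's English description precedes it below -/
import Mathlib

section
/- Completeness of the first verification equation (Equation (1)) of the structure-preserving constant-size signature scheme CSIG: for every k ∈ ℕ, elements g_r ∈ 𝔾₁ and g₂ ∈ 𝔾₂, scalars α, γ_z, ζ, ρ, τ ∈ R and γ : Fin k → R, and every message vector m : Fin k → 𝔾₂, define g_z = γ_z • g_r, gᵢ = γᵢ • g_r (i = 1..k), z = ζ • g₂, r = (α − ρ·τ − γ_z·ζ) • g₂ − Σᵢ γᵢ • mᵢ, s = ρ • g_r, and t = τ • g₂. Then e(g_z, z) + e(g_r, r) + e(s, t) + Σᵢ e(gᵢ, mᵢ) = e(g_r, α • g₂), i.e. an honestly generated CSIG signature satisfies verification equation (1) with A = e(g_r, α • g₂). -/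
/-! Every pairing on the left has a multiple of `g_r` as first argument, so bilinearity moves
all scalars into the second argument and the left side becomes `e g_r` applied to
`(γ_z ζ) • g₂ + r + (ρ τ) • g₂ + Σᵢ γᵢ • mᵢ`, which is `α • g₂` by the choice of `r`. -/

namespace LinearMap

variable {R ι M N P : Type*} [CommRing R] [AddCommGroup M] [AddCommGroup N] [AddCommGroup P]
  [Module R M] [Module R N] [Module R P]

theorem map_smul_smul₂ (e : M →ₗ[R] N →ₗ[R] P) (a b : R) (x : M) (y : N) :
    e (a • x) (b • y) = e x ((a * b) • y) := by
  rw [map_smul₂, map_smul, map_smul, smul_smul]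

theorem sum_map_smul_left₂ (e : M →ₗ[R] N →ₗ[R] P) (s : Finset ι) (c : ι → R) (x : M)
    (y : ι → N) : ∑ i ∈ s, e (c i • x) (y i) = e x (∑ i ∈ s, c i • y i) := by
  simp only [map_smul, smul_apply, map_sum]

end LinearMap

/-- Completeness of verification equation (1) of the structure-preserving
constant-size signature scheme CSIG, over a commutative ring `R` with
`R`-modules `𝔾₁, 𝔾₂, 𝔾₃` and an `R`-bilinear map `e : 𝔾₁ → 𝔾₂ → 𝔾₃`:
an honestly generated signature satisfies
`e(g_z, z) + e(g_r, r) + e(s, t) + Σᵢ e(gᵢ, mᵢ) = e(g_r, α • g₂)`. -/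
theorem csig_verify_eq1_complete {R : Type*} [CommRing R]
    {G₁ G₂ G₃ : Type*} [AddCommGroup G₁] [AddCommGroup G₂] [AddCommGroup G₃]
    [Module R G₁] [Module R G₂] [Module R G₃]
    (e : G₁ →ₗ[R] G₂ →ₗ[R] G₃)
    (k : ℕ) (g_r : G₁) (g₂ : G₂)
    (α γ_z ζ ρ τ : R) (γ : Fin k → R)
    (m : Fin k → G₂)
    (g_z s : G₁) (gi : Fin k → G₁) (z r t : G₂)
    (hg_z : g_z = γ_z • g_r)
    (hgi : ∀ i, gi i = γ i • g_r)
    (hz : z = ζ • g₂)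
    (hr : r = (α - ρ * τ - γ_z * ζ) • g₂ - ∑ i, γ i • m i)
    (hs : s = ρ • g_r)
    (ht : t = τ • g₂) :
    e g_z z + e g_r r + e s t + ∑ i, e (gi i) (m i) = e g_r (α • g₂) := by
  subst hg_z hz hr hs ht
  simp only [hgi]
  rw [e.map_smul_smul₂, e.map_smul_smul₂, e.sum_map_smul_left₂, ← map_add, ← map_add, ← map_add]
  congr 1
  module
end

section
/- Completeness of the second verification equation (Equation (2)) of the structure-preserving constant-size signature scheme CSIG: for every k ∈ ℕ, elements h_u ∈ 𝔾₁ and g₂ ∈ 𝔾₂, scalars β, δ_z, ζ, φ, ω ∈ R and δ : Fin k → R, and every message vector m : Fin k → 𝔾₂, define h_z = δ_z • h_u, hᵢ = δᵢ • h_u (i = 1..k), z = ζ • g₂, u = (β − φ·ω − δ_z·ζ) • g₂ − Σᵢ δᵢ • mᵢ, v = φ • h_u, and w = ω • g₂. Then e(h_z, z) + e(h_u, u) + e(v, w) + Σᵢ e(hᵢ, mᵢ) = e(h_u, β • g₂), i.e. an honestly generated CSIG signature satisfies verification equation (2) with B = e(h_u, β • g₂). -/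
/-!
Every pairing in the verification equation has first argument a multiple of `h_u`, so moving
those scalars across `e` writes the left side as `e h_u X` for a single `X : 𝔾₂`. The signer
chose `u` precisely so that `X = β • g₂`.
-/

theorem LinearMap.map_smul_left_eq_map_smul_right {R M N P : Type*} [CommSemiring R]
    [AddCommMonoid M] [AddCommMonoid N] [AddCommMonoid P] [Module R M] [Module R N] [Module R P]
    (e : M →ₗ[R] N →ₗ[R] P) (a : R) (x : M) (y : N) : e (a • x) y = e x (a • y) := by
  rw [map_smul, map_smul, LinearMap.smul_apply]

/-- Completeness of verification equation (2) of the structure-preserving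
constant-size signature scheme CSIG, over a commutative ring `R` with
`R`-modules `𝔾₁, 𝔾₂, 𝔾₃` and an `R`-bilinear map `e : 𝔾₁ → 𝔾₂ → 𝔾₃`:
an honestly generated signature satisfies
`e(h_z, z) + e(h_u, u) + e(v, w) + Σᵢ e(hᵢ, mᵢ) = e(h_u, β • g₂)`. -/
theorem csig_verify_eq2_complete {R : Type*} [CommRing R]
    {G₁ G₂ G₃ : Type*} [AddCommGroup G₁] [AddCommGroup G₂] [AddCommGroup G₃]
    [Module R G₁] [Module R G₂] [Module R G₃]
    (e : G₁ →ₗ[R] G₂ →ₗ[R] G₃)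
    (k : ℕ) (h_u : G₁) (g₂ : G₂)
    (β δ_z ζ φ ω : R) (δ : Fin k → R)
    (m : Fin k → G₂)
    (h_z v : G₁) (hi : Fin k → G₁) (z u w : G₂)
    (hh_z : h_z = δ_z • h_u)
    (hhi : ∀ i, hi i = δ i • h_u)
    (hz : z = ζ • g₂)
    (hu : u = (β - φ * ω - δ_z * ζ) • g₂ - ∑ i, δ i • m i)
    (hv : v = φ • h_u)
    (hw : w = ω • g₂) :
    e h_z z + e h_u u + e v w + ∑ i, e (hi i) (m i) = e h_u (β • g₂) := by
  simp only [hh_z, hhi, hv, LinearMap.map_smul_left_eq_map_smul_right, ← map_sum (e h_u),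
    ← map_add]
  congr 1
  rw [hz, hu, hw]
  module
end

section
/- Completeness of the dual constant-size signature scheme CSIG1 (the scheme obtained from CSIG by exchanging the roles of 𝔾₁ and 𝔾₂, used inside XSIG): for every k ∈ ℕ, elements g_r, h_u ∈ 𝔾₂ and g₁ ∈ 𝔾₁, scalars α, β, γ_z, δ_z, ζ, ρ, τ, φ, ω ∈ R and γ, δ : Fin k → R, and every message vector m : Fin k → 𝔾₁, define g_z = γ_z • g_r, h_z = δ_z • h_u, gᵢ = γᵢ • g_r, hᵢ = δᵢ • h_u, z = ζ • g₁, r = (α − ρ·τ − γ_z·ζ) • g₁ − Σᵢ γᵢ • mᵢ, s = ρ • g_r, t = τ • g₁, u = (β − φ·ω − δ_z·ζ) • g₁ − Σᵢ δᵢ • mᵢ, v = φ • h_u, w = ω • g₁. Then both verification equations hold: e(z, g_z) + e(r, g_r) + e(t, s) + Σᵢ e(mᵢ, gᵢ) = e(α • g₁, g_r) and e(z, h_z) + e(u, h_u) + e(w, v) + Σᵢ e(mᵢ, hᵢ) = e(β • g₁, h_u). -/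
/-- Completeness of the dual constant-size signature scheme CSIG1 (CSIG with the
roles of `𝔾₁` and `𝔾₂` exchanged), over a commutative ring `R` with
`R`-modules `𝔾₁, 𝔾₂, 𝔾₃` and an `R`-bilinear map `e : 𝔾₁ → 𝔾₂ → 𝔾₃`:
an honestly generated CSIG1 signature on `m ∈ 𝔾₁^k` satisfies both
verification equations. -/
theorem csig1_verify_complete {R : Type*} [CommRing R]
    {G₁ G₂ G₃ : Type*} [AddCommGroup G₁] [AddCommGroup G₂] [AddCommGroup G₃]
    [Module R G₁] [Module R G₂] [Module R G₃]
    (e : G₁ →ₗ[R] G₂ →ₗ[R] G₃)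
    (k : ℕ) (g_r h_u : G₂) (g₁ : G₁)
    (α β γ_z δ_z ζ ρ τ φ ω : R) (γ δ : Fin k → R)
    (m : Fin k → G₁)
    (g_z h_z s v : G₂) (gi hi : Fin k → G₂) (z r t u w : G₁)
    (hg_z : g_z = γ_z • g_r)
    (hh_z : h_z = δ_z • h_u)
    (hgi : ∀ i, gi i = γ i • g_r)
    (hhi : ∀ i, hi i = δ i • h_u)
    (hz : z = ζ • g₁)
    (hr : r = (α - ρ * τ - γ_z * ζ) • g₁ - ∑ i, γ i • m i)
    (hs : s = ρ • g_r)
    (ht : t = τ • g₁)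
    (hu : u = (β - φ * ω - δ_z * ζ) • g₁ - ∑ i, δ i • m i)
    (hv : v = φ • h_u)
    (hw : w = ω • g₁) :
    e z g_z + e r g_r + e t s + ∑ i, e (m i) (gi i) = e (α • g₁) g_r ∧
    e z h_z + e u h_u + e w v + ∑ i, e (m i) (hi i) = e (β • g₁) h_u := by
  subst hg_z hh_z hz hr hs ht hu hv hw
  constructor <;>
  · simp only [hgi, hhi, map_smul, map_sub, map_sum, LinearMap.sub_apply,
      LinearMap.smul_apply, LinearMap.sum_apply, sub_smul, smul_smul]
    abel_nf
end

section
/- Completeness of the mixed-group signature scheme XSIG: let k₁, k₂ ∈ ℕ, let m : Fin k₁ → 𝔾₁ and m̃ : Fin k₂ → 𝔾₂ be a mixed-group message. Let σ₂ = (z, r, s, t, u, v, w) be the CSIG2 signature on m̃ computed with base points g_r, h_u ∈ 𝔾₁, g₂ ∈ 𝔾₂, secret scalars α, β, γ_z, δ_z, γ, δ and randomness ζ, ρ, τ, φ, ω (so in particular s = ρ • g_r ∈ 𝔾₁), and let σ₁ = (z′, r′, s′, t′, u′, v′, w′) be the dual CSIG1 signature on the extended vector m‖s ∈ 𝔾₁^{k₁+1}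 (obtained by appending s to m) computed with base points g′_r, h′_u ∈ 𝔾₂, g₁ ∈ 𝔾₁, secret scalars α′, β′, γ′_z, δ′_z, γ′, δ′ and randomness ζ′, ρ′, τ′, φ′, ω′, where all signature components are given by the signing formulas of the respective schemes. Then all four verification equations hold simultaneously: the two CSIG2 equations e(g_z, z) + e(g_r, r) + e(s·, t) + Σᵢ e(gᵢ, m̃ᵢ) = e(g_r, α • g₂) and e(h_z, z) + e(h_u, u) + e(v, w) + Σᵢ e(hᵢ, m̃ᵢ) = e(h_u, β • g₂) for σ₂ on m̃ (with s· = s viewed in 𝔾₁), and the two CSIG1 equations e(z′, g′_z) + e(r′, g′_r) + e(t′, s′) + Σᵢ e((m‖s)ᵢ, g′ᵢ) = e(α′ • g₁, g′_r) and e(z′, h′_z) + e(u′, h′_u) + e(w′, v′) + Σᵢ e((m‖s)ᵢ, h′ᵢ) = e(β′ • g₁, h′_u) for σ₁ on m‖s; hence XSIG.Verify outputs 1 on every honestly generated XSIG signature. -/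
/-!
All key elements of `𝔾₁` in a CSIG2 verification equation are multiples of the base point, so by
bilinearity the left-hand side is `e(g_r, x)` for a single `x ∈ 𝔾₂`; in `x` the message terms
and the randomisers `ζ`, `ρτ` cancel, leaving `α • g₂`. A CSIG1 equation is a CSIG2 equation for
the flipped pairing, and holds for every message, in particular for `m‖s`.
-/

theorem csig2_verification_eq {R G₁ G₂ G₃ ι : Type*} [CommRing R]
    [AddCommGroup G₁] [AddCommGroup G₂] [AddCommGroup G₃]
    [Module R G₁] [Module R G₂] [Module R G₃] [Fintype ι]
    (e : G₁ →ₗ[R] G₂ →ₗ[R] G₃) (g : G₁) (g₂ : G₂) (mt : ι → G₂)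
    (α γ_z ζ ρ τ : R) (γ : ι → R) :
    e (γ_z • g) (ζ • g₂) + e g ((α - ρ * τ - γ_z * ζ) • g₂ - ∑ i, γ i • mt i)
      + e (ρ • g) (τ • g₂) + ∑ i, e (γ i • g) (mt i) = e g (α • g₂) := by
  have cancel : γ_z • ζ • g₂ + ((α - ρ * τ - γ_z * ζ) • g₂ - ∑ i, γ i • mt i)
      + ρ • τ • g₂ + ∑ i, γ i • mt i = α • g₂ := by
    module
  rw [← cancel]
  simp only [map_add, map_sub, map_smul, map_sum, LinearMap.smul_apply,
    smul_comm ζ γ_z, smul_comm τ ρ]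

theorem xsig_verify_complete_general {R : Type*} [CommRing R]
    {G₁ G₂ G₃ : Type*} [AddCommGroup G₁] [AddCommGroup G₂] [AddCommGroup G₃]
    [Module R G₁] [Module R G₂] [Module R G₃]
    (e : G₁ →ₗ[R] G₂ →ₗ[R] G₃)
    (k₁ k₂ : ℕ) (mt : Fin k₂ → G₂)
    -- CSIG2 keys, randomness and signature components
    (g_r h_u : G₁) (g₂ : G₂)
    (α β γ_z δ_z ζ ρ τ φ ω : R) (γ δ : Fin k₂ → R)
    (g_z h_z s v : G₁) (gi hi : Fin k₂ → G₁) (z r t u w : G₂)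
    (hg_z : g_z = γ_z • g_r) (hh_z : h_z = δ_z • h_u)
    (hgi : ∀ i, gi i = γ i • g_r) (hhi : ∀ i, hi i = δ i • h_u)
    (hz : z = ζ • g₂)
    (hr : r = (α - ρ * τ - γ_z * ζ) • g₂ - ∑ i, γ i • mt i)
    (hs : s = ρ • g_r)
    (ht : t = τ • g₂)
    (hu : u = (β - φ * ω - δ_z * ζ) • g₂ - ∑ i, δ i • mt i)
    (hv : v = φ • h_u)
    (hw : w = ω • g₂)
    -- the extended message m‖s ∈ 𝔾₁^{k₁+1}
    (ms : Fin (k₁ + 1) → G₁)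
    -- CSIG1 (dual) keys, randomness and signature components
    (g_r' h_u' : G₂) (g₁ : G₁)
    (α' β' γ_z' δ_z' ζ' ρ' τ' φ' ω' : R) (γ' δ' : Fin (k₁ + 1) → R)
    (g_z' h_z' s' v' : G₂) (gi' hi' : Fin (k₁ + 1) → G₂) (z' r' t' u' w' : G₁)
    (hg_z' : g_z' = γ_z' • g_r') (hh_z' : h_z' = δ_z' • h_u')
    (hgi' : ∀ i, gi' i = γ' i • g_r') (hhi' : ∀ i, hi' i = δ' i • h_u')
    (hz' : z' = ζ' • g₁)
    (hr' : r' = (α' - ρ' * τ' - γ_z' * ζ') • g₁ - ∑ i, γ' i • ms i)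
    (hs' : s' = ρ' • g_r')
    (ht' : t' = τ' • g₁)
    (hu' : u' = (β' - φ' * ω' - δ_z' * ζ') • g₁ - ∑ i, δ' i • ms i)
    (hv' : v' = φ' • h_u')
    (hw' : w' = ω' • g₁) :
    (e g_z z + e g_r r + e s t + ∑ i, e (gi i) (mt i) = e g_r (α • g₂)) ∧
    (e h_z z + e h_u u + e v w + ∑ i, e (hi i) (mt i) = e h_u (β • g₂)) ∧
    (e z' g_z' + e r' g_r' + e t' s' + ∑ i, e (ms i) (gi' i) = e (α' • g₁) g_r') ∧
    (e z' h_z' + e u' h_u' + e w' v' + ∑ i, e (ms i) (hi' i) = e (β' • g₁) h_u') := by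
  obtain rfl : gi = fun i => γ i • g_r := funext hgi
  obtain rfl : hi = fun i => δ i • h_u := funext hhi
  obtain rfl : gi' = fun i => γ' i • g_r' := funext hgi'
  obtain rfl : hi' = fun i => δ' i • h_u' := funext hhi'
  subst hg_z hh_z hz hr hs ht hu hv hw hg_z' hh_z' hz' hr' hs' ht' hu' hv' hw'
  exact ⟨csig2_verification_eq e g_r g₂ mt α γ_z ζ ρ τ γ,
    csig2_verification_eq e h_u g₂ mt β δ_z ζ φ ω δ,
    csig2_verification_eq e.flip g_r' g₁ ms α' γ_z' ζ' ρ' τ' γ',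
    csig2_verification_eq e.flip h_u' g₁ ms β' δ_z' ζ' φ' ω' δ'⟩

/-- Completeness of the mixed-group structure-preserving signature scheme XSIG:
an honestly generated XSIG signature `(σ₁, σ₂)` on a mixed-group message
`(m, m̃) ∈ 𝔾₁^{k₁} × 𝔾₂^{k₂}` — where `σ₂` is the CSIG2 signature on `m̃`
and `σ₁` is the dual CSIG1 signature on the extended vector `m‖s` —
satisfies all four verification equations, so `XSIG.Verify` outputs 1. -/
theorem xsig_verify_complete {R : Type*} [CommRing R]
    {G₁ G₂ G₃ : Type*} [AddCommGroup G₁] [AddCommGroup G₂] [AddCommGroup G₃]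
    [Module R G₁] [Module R G₂] [Module R G₃]
    (e : G₁ →ₗ[R] G₂ →ₗ[R] G₃)
    (k₁ k₂ : ℕ) (m : Fin k₁ → G₁) (mt : Fin k₂ → G₂)
    -- CSIG2 keys, randomness and signature components
    (g_r h_u : G₁) (g₂ : G₂)
    (α β γ_z δ_z ζ ρ τ φ ω : R) (γ δ : Fin k₂ → R)
    (g_z h_z s v : G₁) (gi hi : Fin k₂ → G₁) (z r t u w : G₂)
    (hg_z : g_z = γ_z • g_r) (hh_z : h_z = δ_z • h_u)
    (hgi : ∀ i, gi i = γ i • g_r) (hhi : ∀ i, hi i = δ i • h_u)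
    (hz : z = ζ • g₂)
    (hr : r = (α - ρ * τ - γ_z * ζ) • g₂ - ∑ i, γ i • mt i)
    (hs : s = ρ • g_r)
    (ht : t = τ • g₂)
    (hu : u = (β - φ * ω - δ_z * ζ) • g₂ - ∑ i, δ i • mt i)
    (hv : v = φ • h_u)
    (hw : w = ω • g₂)
    -- the extended message m‖s ∈ 𝔾₁^{k₁+1}
    (ms : Fin (k₁ + 1) → G₁)
    (hms : ms = Fin.snoc m s)
    -- CSIG1 (dual) keys, randomness and signature components
    (g_r' h_u' : G₂) (g₁ : G₁)
    (α' β' γ_z' δ_z' ζ' ρ' τ' φ' ω' : R) (γ' δ' : Fin (k₁ + 1) → R)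
    (g_z' h_z' s' v' : G₂) (gi' hi' : Fin (k₁ + 1) → G₂) (z' r' t' u' w' : G₁)
    (hg_z' : g_z' = γ_z' • g_r') (hh_z' : h_z' = δ_z' • h_u')
    (hgi' : ∀ i, gi' i = γ' i • g_r') (hhi' : ∀ i, hi' i = δ' i • h_u')
    (hz' : z' = ζ' • g₁)
    (hr' : r' = (α' - ρ' * τ' - γ_z' * ζ') • g₁ - ∑ i, γ' i • ms i)
    (hs' : s' = ρ' • g_r')
    (ht' : t' = τ' • g₁)
    (hu' : u' = (β' - φ' * ω' - δ_z' * ζ') • g₁ - ∑ i, δ' i • ms i)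
    (hv' : v' = φ' • h_u')
    (hw' : w' = ω' • g₁) :
    (e g_z z + e g_r r + e s t + ∑ i, e (gi i) (mt i) = e g_r (α • g₂)) ∧
    (e h_z z + e h_u u + e v w + ∑ i, e (hi i) (mt i) = e h_u (β • g₂)) ∧
    (e z' g_z' + e r' g_r' + e t' s' + ∑ i, e (ms i) (gi' i) = e (α' • g₁) g_r') ∧
    (e z' h_z' + e u' h_u' + e w' v' + ∑ i, e (ms i) (hi' i) = e (β' • g₁) h_u') :=
  xsig_verify_complete_general e k₁ k₂ mt g_r h_u g₂ α β γ_z δ_z ζ ρ τ φ ω γ δ g_z h_z s v gi hi z r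
    t u w hg_z hh_z hgi hhi hz hr hs ht hu hv hw ms g_r' h_u' g₁ α' β' γ_z' δ_z' ζ' ρ' τ' φ' ω' γ'
    δ' g_z' h_z' s' v' gi' hi' z' r' t' u' w' hg_z' hh_z' hgi' hhi' hz' hr' hs' ht' hu' hv' hw'
end

section
/- Completeness of the Groth–Sahai NIWI proof for a pairing-product equation (Equation (4)): let k, l ∈ ℕ, let A : Fin l → 𝔾₁, B : Fin k → 𝔾₂, Γ : Matrix (Fin k) (Fin l) R, and t ∈ 𝔾₃ describe a pairing-product equation, and suppose the witnesses X : Fin k → 𝔾₁ and Y : Fin l → 𝔾₂ satisfy it, i.e. Σⱼ e(Aⱼ, Yⱼ) + Σᵢ e(Xᵢ, Bᵢ) + Σᵢ Σⱼ Γᵢⱼ • e(Xᵢ, Yⱼ) = t. Then for all commitment randomness R : Fin k → R and S : Fin l → R and all CRS elements U ∈ 𝔾₁, V ∈ 𝔾₂, the commitments Cᵢ = Xᵢ + Rᵢ • U and Dⱼ = Yⱼ + Sⱼ • V together with the proof elements π = Σᵢ Rᵢ • Bᵢ + Σᵢ Σⱼ (Rᵢ·Γᵢⱼ) • Yⱼ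 + (Σᵢ Σⱼ Rᵢ·Γᵢⱼ·Sⱼ) • V ∈ 𝔾₂ and θ = Σⱼ Sⱼ • Aⱼ + Σᵢ Σⱼ (Sⱼ·Γᵢⱼ) • Xᵢ ∈ 𝔾₁ satisfy the verification equation Σⱼ e(Aⱼ, Dⱼ) + Σᵢ e(Cᵢ, Bᵢ) + Σᵢ Σⱼ Γᵢⱼ • e(Cᵢ, Dⱼ) = t + e(U, π) + e(θ, V). -/
/-! The left-hand side of a pairing-product equation is affine in each of its two variables.
Replacing `X` by `C = X + R • U` adds `e(U, ·)` of the `R`-weighted coefficients of `X`, evaluated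
at `D`; that argument is exactly `π`. Replacing then `Y` by `D = Y + S • V` adds `e(θ, V)`, and
what remains is the left-hand side at the witnesses, which is `t`. -/

open Finset

section PairingProduct

variable {R G₁ G₂ G₃ ι κ : Type*} [CommRing R] [Fintype ι] [Fintype κ]
  [AddCommGroup G₁] [AddCommGroup G₂] [AddCommGroup G₃]
  [Module R G₁] [Module R G₂] [Module R G₃]
  (e : G₁ →ₗ[R] G₂ →ₗ[R] G₃) (A : κ → G₁) (B : ι → G₂) (Γ : Matrix ι κ R)

def pairingProduct (X : ι → G₁) (Y : κ → G₂) : G₃ :=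
  ∑ j, e (A j) (Y j) + ∑ i, e (X i) (B i) + ∑ i, ∑ j, Γ i j • e (X i) (Y j)

theorem pairingProduct_add_smul_left (X : ι → G₁) (Y : κ → G₂) (r : ι → R) (U : G₁) :
    pairingProduct e A B Γ (fun i ↦ X i + r i • U) Y = pairingProduct e A B Γ X Y
      + e U (∑ i, r i • B i + ∑ i, ∑ j, (r i * Γ i j) • Y j) := by
  simp only [pairingProduct, map_add, map_smul, map_sum, LinearMap.add_apply,
    LinearMap.smul_apply, smul_add, sum_add_distrib, smul_smul, mul_comm]
  abel

theorem pairingProduct_add_smul_right (X : ι → G₁) (Y : κ → G₂) (s : κ → R) (V : G₂) :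
    pairingProduct e A B Γ X (fun j ↦ Y j + s j • V) = pairingProduct e A B Γ X Y
      + e (∑ j, s j • A j + ∑ i, ∑ j, (s j * Γ i j) • X i) V := by
  simp only [pairingProduct, map_add, map_smul, map_sum, LinearMap.add_apply,
    LinearMap.sum_apply, LinearMap.smul_apply, smul_add, sum_add_distrib, smul_smul, mul_comm]
  abel

end PairingProduct

/-- Completeness of the Groth–Sahai NIWI proof for a pairing-product equation
(Equation (4)): if the witnesses `(X, Y)` satisfy the pairing-product equation
described by `(A, B, Γ, t)`, then for any commitment randomness `(Rv, S)` and
CRS elements `(U, V)`, the commitments `C, D` and proof elements `(π, θ)`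
produced by the NIWI prover satisfy the verification equation. -/
theorem niwi_proof_complete {R : Type*} [CommRing R]
    {G₁ G₂ G₃ : Type*} [AddCommGroup G₁] [AddCommGroup G₂] [AddCommGroup G₃]
    [Module R G₁] [Module R G₂] [Module R G₃]
    (e : G₁ →ₗ[R] G₂ →ₗ[R] G₃)
    (k l : ℕ)
    (A : Fin l → G₁) (B : Fin k → G₂) (Γ : Matrix (Fin k) (Fin l) R) (t : G₃)
    (X : Fin k → G₁) (Y : Fin l → G₂)
    (hsat : ∑ j, e (A j) (Y j) + ∑ i, e (X i) (B i)
        + ∑ i, ∑ j, Γ i j • e (X i) (Y j) = t)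
    (Rv : Fin k → R) (S : Fin l → R) (U : G₁) (V : G₂)
    (C : Fin k → G₁) (D : Fin l → G₂) (π : G₂) (θ : G₁)
    (hC : ∀ i, C i = X i + Rv i • U)
    (hD : ∀ j, D j = Y j + S j • V)
    (hπ : π = ∑ i, Rv i • B i + ∑ i, ∑ j, (Rv i * Γ i j) • Y j
        + (∑ i, ∑ j, Rv i * Γ i j * S j) • V)
    (hθ : θ = ∑ j, S j • A j + ∑ i, ∑ j, (S j * Γ i j) • X i) :
    ∑ j, e (A j) (D j) + ∑ i, e (C i) (B i)
      + ∑ i, ∑ j, Γ i j • e (C i) (D j) = t + e U π + e θ V := by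
  have hC' : C = fun i ↦ X i + Rv i • U := funext hC
  have hD' : D = fun j ↦ Y j + S j • V := funext hD
  have hπD : π = ∑ i, Rv i • B i + ∑ i, ∑ j, (Rv i * Γ i j) • D j := by
    simp only [hπ, hD', smul_add, sum_add_distrib, smul_smul, sum_smul, add_assoc]
  have hsat' : pairingProduct e A B Γ X Y = t := hsat
  calc pairingProduct e A B Γ C D
      = pairingProduct e A B Γ X D + e U π := by
        rw [hC', pairingProduct_add_smul_left, hπD]
    _ = t + e θ V + e U π := by
        rw [hD', pairingProduct_add_smul_right, hsat', hθ]
    _ = t + e U π + e θ V := add_right_comm _ _ _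
end
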